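/- arXiv:2212.08368 — 3 statements merged into one kernel-verified Lean document; each statement's English description precedes it below -/
import Mathlib

section
/- Let X be a geodesic metric space, p ∈ X, and γ : [0,T] → X a continuous (λ, ε)-quasi-geodesic. Let γ(t) be a point on γ closest to p, and let α be a geodesic from p to γ(t). Then the concatenation α · γ|[t,T] is a continuous (3λ, ε)-quasi-geodesic. -/
/-!
With `d = dist p (γ t)`, the concatenation is the geodesic `α` on `[0, d]` and a translate of
`γ` on `[d, d + (T - t)]`, so only pairs `x = α s`, `q = γ u` across the junction need an
argument. Since `x` lies on a geodesic from `p` to the closest point `γ t`, the triangle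
inequality through `p` gives `dist x (γ t) ≤ dist x q`. So `dist x q` bounds both legs of the
broken path `x → γ t → q`, and the quasi-geodesic bounds of `γ` on the second leg give the
`(3 λ, ε)` bounds.
-/

open Set Metric

universe u

/-- `γ` restricted to `I` is a `(lam, eps)`-quasi-geodesic. -/
def IsQuasiGeodesicOn {X : Type*} [MetricSpace X] (γ : ℝ → X) (I : Set ℝ)
    (lam eps : ℝ) : Prop :=
  ∀ s ∈ I, ∀ t ∈ I,
    (1 / lam) * |s - t| - eps ≤ dist (γ s) (γ t) ∧ dist (γ s) (γ t) ≤ lam * |s - t| + eps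

/-- `γ` restricted to `I` is a (unit-speed) geodesic. -/
def IsGeodesicOn {X : Type*} [MetricSpace X] (γ : ℝ → X) (I : Set ℝ) : Prop :=
  ∀ s ∈ I, ∀ t ∈ I, dist (γ s) (γ t) = |s - t|

/-- A metric space is geodesic if any two points are joined by a geodesic. -/
def GeodesicSpace (X : Type*) [MetricSpace X] : Prop :=
  ∀ x y : X, ∃ γ : ℝ → X, γ 0 = x ∧ γ (dist x y) = y ∧ IsGeodesicOn γ (Icc 0 (dist x y))

/-- A Morse gauge: an increasing map `ℝ≥1 × ℝ≥0 → ℝ≥0`, continuous in the second argument. -/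
def IsMorseGauge (M : ℝ → ℝ → ℝ) : Prop :=
  (∀ l e, 1 ≤ l → 0 ≤ e → 0 ≤ M l e) ∧
  (∀ l l' e e', 1 ≤ l → 0 ≤ e → l ≤ l' → e ≤ e' → M l e ≤ M l' e') ∧
  (∀ l, 1 ≤ l → ContinuousOn (fun e => M l e) (Ici 0))

/-- Pointwise partial order on Morse gauges (on the domain `ℝ≥1 × ℝ≥0`). -/
def GaugeLE (M N : ℝ → ℝ → ℝ) : Prop :=
  ∀ l e, 1 ≤ l → 0 ≤ e → M l e ≤ N l e

/-- `γ` restricted to `I` is `M`-Morse: every continuous `(lam, eps)`-quasi-geodesic with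
endpoints on `γ` lies in the closed `M lam eps`-neighbourhood of `γ`. -/
def IsMorseWith {X : Type*} [MetricSpace X] (M : ℝ → ℝ → ℝ) (γ : ℝ → X) (I : Set ℝ) : Prop :=
  ∀ lam eps : ℝ, 1 ≤ lam → 0 ≤ eps →
    ∀ (η : ℝ → X) (a b : ℝ), a ≤ b →
      ContinuousOn η (Icc a b) → IsQuasiGeodesicOn η (Icc a b) lam eps →
      η a ∈ γ '' I → η b ∈ γ '' I →
      ∀ t ∈ Icc a b, ∃ s ∈ I, dist (η t) (γ s) ≤ M lam eps

/-- The constant `δ_M` associated to a Morse gauge `M`. -/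
def morseDelta (M : ℝ → ℝ → ℝ) : ℝ :=
  max (4 * M 1 (2 * M 5 0) + 2 * M 5 0) (8 * M 3 0)

section

variable {X : Type*} [MetricSpace X]

theorem IsQuasiGeodesicOn.of_le {γ : ℝ → X} {I : Set ℝ} {lam eps : ℝ}
    (h : ∀ s ∈ I, ∀ t ∈ I, s ≤ t →
      (1 / lam) * |s - t| - eps ≤ dist (γ s) (γ t) ∧ dist (γ s) (γ t) ≤ lam * |s - t| + eps) :
    IsQuasiGeodesicOn γ I lam eps := by
  intro s hs t ht
  rcases le_total s t with hst | hts
  · exact h s hs t ht hst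
  · simpa only [dist_comm, abs_sub_comm] using h t ht s hs hts

theorem IsQuasiGeodesicOn.mono_constants {γ : ℝ → X} {I : Set ℝ} {lam eps lam' eps' : ℝ}
    (h : IsQuasiGeodesicOn γ I lam eps) (hlam : 0 < lam) (hlam' : lam ≤ lam')
    (heps' : eps ≤ eps') : IsQuasiGeodesicOn γ I lam' eps' := by
  intro s hs t ht
  have hst := abs_nonneg (s - t)
  have hinv : 1 / lam' ≤ 1 / lam := one_div_le_one_div_of_le hlam hlam'
  obtain ⟨hlow, hup⟩ := h s hs t ht
  constructor <;> nlinarith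

theorem IsQuasiGeodesicOn.comp_translate {γ : ℝ → X} {I J : Set ℝ} {lam eps : ℝ}
    (h : IsQuasiGeodesicOn γ I lam eps) {a b : ℝ} (hJ : MapsTo (fun u => a + (u - b)) J I) :
    IsQuasiGeodesicOn (fun u => γ (a + (u - b))) J lam eps := by
  intro s hs t ht
  simpa only [show a + (s - b) - (a + (t - b)) = s - t by ring] using h _ (hJ hs) _ (hJ ht)

theorem IsGeodesicOn.isQuasiGeodesicOn {γ : ℝ → X} {I : Set ℝ} (h : IsGeodesicOn γ I) :
    IsQuasiGeodesicOn γ I 1 0 := by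
  intro s hs t ht
  simp [h s hs t ht]

theorem IsGeodesicOn.lipschitzOnWith {γ : ℝ → X} {I : Set ℝ} (h : IsGeodesicOn γ I) :
    LipschitzOnWith 1 γ I :=
  LipschitzOnWith.of_dist_le_mul fun s hs t ht => by simp [h s hs t ht, Real.dist_eq]

theorem IsGeodesicOn.dist_add_dist {γ : ℝ → X} {I : Set ℝ} (h : IsGeodesicOn γ I)
    {a b c : ℝ} (ha : a ∈ I) (hb : b ∈ I) (hc : c ∈ I) (hab : a ≤ b) (hbc : b ≤ c) :
    dist (γ a) (γ b) + dist (γ b) (γ c) = dist (γ a) (γ c) := by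
  rw [h a ha b hb, h b hb c hc, h a ha c hc, abs_sub_comm a b, abs_sub_comm b c,
    abs_sub_comm a c, abs_of_nonneg (sub_nonneg.2 hab), abs_of_nonneg (sub_nonneg.2 hbc),
    abs_of_nonneg (sub_nonneg.2 (hab.trans hbc))]
  ring

theorem dist_le_dist_of_between_of_closer {p x y q : X}
    (hx : dist p x + dist x y = dist p y) (hq : dist p y ≤ dist p q) :
    dist x y ≤ dist x q := by
  linarith [dist_triangle p x q]

theorem quasiGeodesic_bounds_of_between_of_closer {p x y q : X} {lam eps b : ℝ}
    (hlam : 1 ≤ lam) (heps : 0 ≤ eps) (hb : 0 ≤ b)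
    (hx : dist p x + dist x y = dist p y) (hq : dist p y ≤ dist p q)
    (hyq : (1 / lam) * b - eps ≤ dist y q ∧ dist y q ≤ lam * b + eps) :
    (1 / (3 * lam)) * (dist x y + b) - eps ≤ dist x q ∧
      dist x q ≤ 3 * lam * (dist x y + b) + eps := by
  have hlam0 : 0 < lam := one_pos.trans_le hlam
  have hxy : dist x y ≤ dist x q := dist_le_dist_of_between_of_closer hx hq
  have hyq_le : dist y q ≤ 2 * dist x q := by linarith [dist_triangle y x q, dist_comm x y]
  have hxq_le : dist x q ≤ dist x y + dist y q := dist_triangle x y q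
  have hb_le : b ≤ lam * (2 * dist x q + eps) := by
    rw [← div_le_iff₀' hlam0]
    linarith [hyq.1, one_div_mul_eq_div lam b]
  have hxy0 := dist_nonneg (x := x) (y := y)
  constructor
  · rw [one_div_mul_eq_div, sub_le_iff_le_add, div_le_iff₀ (by positivity)]
    nlinarith [mul_nonneg (sub_nonneg.2 hlam) hxy0, mul_nonneg hlam0.le heps]
  · nlinarith [mul_nonneg (sub_nonneg.2 hlam) hxy0, mul_nonneg hlam0.le hb]

section Concatenation

variable {p : X} {γ α : ℝ → X} {T lam eps t : ℝ}

theorem continuousOn_concat (hcont : ContinuousOn γ (Icc 0 T)) (ht : t ∈ Icc 0 T)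
    (hα1 : α (dist p (γ t)) = γ t) (hαgeo : IsGeodesicOn α (Icc 0 (dist p (γ t)))) :
    ContinuousOn (fun u => if u ≤ dist p (γ t) then α u else γ (t + (u - dist p (γ t))))
      (Icc 0 (dist p (γ t) + (T - t))) := by
  set d := dist p (γ t)
  have hd : d ≤ d + (T - t) := by linarith [ht.2]
  rw [← Icc_union_Icc_eq_Icc dist_nonneg hd]
  refine ContinuousOn.union_of_isClosed ?_ ?_ isClosed_Icc isClosed_Icc
  · refine hαgeo.lipschitzOnWith.continuousOn.congr fun u hu => ?_
    simp [hu.2]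
  · have hshift : MapsTo (fun u => t + (u - d)) (Icc d (d + (T - t))) (Icc 0 T) :=
      fun u hu => ⟨by linarith [hu.1, ht.1], by linarith [hu.2]⟩
    refine (hcont.comp (by fun_prop) hshift).congr fun u hu => ?_
    rcases hu.1.eq_or_lt with rfl | hdu
    · simp [hα1]
    · simp [not_le.2 hdu]

theorem isQuasiGeodesicOn_concat (hlam : 1 ≤ lam) (heps : 0 ≤ eps)
    (hqg : IsQuasiGeodesicOn γ (Icc 0 T) lam eps) (ht : t ∈ Icc 0 T)
    (hclosest : ∀ s ∈ Icc 0 T, dist p (γ t) ≤ dist p (γ s))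
    (hα0 : α 0 = p) (hα1 : α (dist p (γ t)) = γ t)
    (hαgeo : IsGeodesicOn α (Icc 0 (dist p (γ t)))) :
    IsQuasiGeodesicOn (fun u => if u ≤ dist p (γ t) then α u else γ (t + (u - dist p (γ t))))
      (Icc 0 (dist p (γ t) + (T - t))) (3 * lam) eps := by
  set d := dist p (γ t)
  have hlam0 : 0 < lam := one_pos.trans_le hlam
  have hshift : MapsTo (fun u => t + (u - d)) (Icc 0 (d + (T - t)) ∩ Ici d) (Icc 0 T) :=
    fun u hu => ⟨by linarith [hu.2.out, ht.1], by linarith [hu.1.2]⟩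
  refine IsQuasiGeodesicOn.of_le fun s hs u hu hsu => ?_
  rcases le_or_gt u d with hud | hud
  · have hsd : s ≤ d := hsu.trans hud
    simp only [if_pos hsd, if_pos hud]
    exact (hαgeo.isQuasiGeodesicOn.mono_constants one_pos (by linarith) heps)
      s ⟨hs.1, hsd⟩ u ⟨hu.1, hud⟩
  have hγu : t + (u - d) ∈ Icc 0 T := hshift ⟨hu, hud.le⟩
  rcases le_or_gt s d with hsd | hsd
  · simp only [if_pos hsd, if_neg (not_le.2 hud)]
    have hαs : s ∈ Icc 0 d := ⟨hs.1, hsd⟩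
    have hαd : d ∈ Icc 0 d := ⟨dist_nonneg, le_rfl⟩
    have hbetween : dist p (α s) + dist (α s) (γ t) = dist p (γ t) := by
      rw [← hα0, ← hα1]
      exact hαgeo.dist_add_dist ⟨le_rfl, dist_nonneg⟩ hαs hαd hαs.1 hsd
    have hleg : dist (α s) (γ t) = d - s := by
      rw [← hα1, hαgeo s hαs d hαd, abs_sub_comm, abs_of_nonneg (by linarith)]
    have hγ := hqg t ht _ hγu
    rw [show t - (t + (u - d)) = -(u - d) by ring, abs_neg, abs_of_nonneg (by linarith)] at hγ
    have h := quasiGeodesic_bounds_of_between_of_closer hlam heps (by linarith) hbetween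
      (hclosest _ hγu) hγ
    have hlen : d - s + (u - d) = |s - u| := by
      rw [abs_sub_comm, abs_of_nonneg (by linarith)]
      ring
    rwa [hleg, hlen] at h
  · simp only [if_neg (not_le.2 hsd), if_neg (not_le.2 hud)]
    exact ((hqg.comp_translate hshift).mono_constants hlam0 (by linarith) le_rfl)
      s ⟨hs, hsd.le⟩ u ⟨hu, hud.le⟩

end Concatenation

end

theorem statement0_general {X : Type u} [MetricSpace X]
    (p : X) (T lam eps t : ℝ) (γ : ℝ → X)
    (hlam : 1 ≤ lam) (heps : 0 ≤ eps)
    (hcont : ContinuousOn γ (Icc 0 T))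
    (hqg : IsQuasiGeodesicOn γ (Icc 0 T) lam eps)
    (ht : t ∈ Icc 0 T)
    (hclosest : ∀ s ∈ Icc 0 T, dist p (γ t) ≤ dist p (γ s))
    (α : ℝ → X) (hα0 : α 0 = p) (hα1 : α (dist p (γ t)) = γ t)
    (hαgeo : IsGeodesicOn α (Icc 0 (dist p (γ t)))) :
    ContinuousOn (fun u => if u ≤ dist p (γ t) then α u else γ (t + (u - dist p (γ t))))
        (Icc 0 (dist p (γ t) + (T - t))) ∧
      IsQuasiGeodesicOn
        (fun u => if u ≤ dist p (γ t) then α u else γ (t + (u - dist p (γ t))))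
        (Icc 0 (dist p (γ t) + (T - t))) (3 * lam) eps :=
  ⟨continuousOn_concat hcont ht hα1 hαgeo,
    isQuasiGeodesicOn_concat hlam heps hqg ht hclosest hα0 hα1 hαgeo⟩

/-- If `γ : [0,T] → X` is a continuous `(lam, eps)`-quasi-geodesic in a geodesic
metric space, `γ t` is a closest point on `γ` to `p`, and `α` is a geodesic from `p` to `γ t`,
then the concatenation `α · γ|[t,T]` is a continuous `(3 lam, eps)`-quasi-geodesic. -/
theorem statement0 {X : Type u} [MetricSpace X] (hX : GeodesicSpace X)
    (p : X) (T lam eps t : ℝ) (γ : ℝ → X)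
    (hT : 0 ≤ T) (hlam : 1 ≤ lam) (heps : 0 ≤ eps)
    (hcont : ContinuousOn γ (Icc 0 T))
    (hqg : IsQuasiGeodesicOn γ (Icc 0 T) lam eps)
    (ht : t ∈ Icc 0 T)
    (hclosest : ∀ s ∈ Icc 0 T, dist p (γ t) ≤ dist p (γ s))
    (α : ℝ → X) (hα0 : α 0 = p) (hα1 : α (dist p (γ t)) = γ t)
    (hαgeo : IsGeodesicOn α (Icc 0 (dist p (γ t)))) :
    ContinuousOn (fun u => if u ≤ dist p (γ t) then α u else γ (t + (u - dist p (γ t))))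
        (Icc 0 (dist p (γ t) + (T - t))) ∧
      IsQuasiGeodesicOn
        (fun u => if u ≤ dist p (γ t) then α u else γ (t + (u - dist p (γ t))))
        (Icc 0 (dist p (γ t) + (T - t))) (3 * lam) eps :=
  statement0_general p T lam eps t γ hlam heps hcont hqg ht hclosest α hα0 hα1 hαgeo
end

section
/- Let X be a geodesic metric space, p, q ∈ X, and γ : [0,T] → X a continuous (λ, ε)-quasi-geodesic. Let γ(t) and γ(t') be points on γ closest to p and q respectively, with t ≤ t'. Let α be a geodesic from p to γ(t) and β a geodesic from γ(t') to q. If |t − t'| ≥ 3λ(d(p, γ(t)) + d(q, γ(t'))), then the concatenation α · γ|[t,t'] · β is a continuous (3λ, ε)-quasi-geodesic. -/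
/-!
On each of the three pieces the path is a geodesic or a reparametrisation of `γ`, and for two
points on different pieces the upper bound is the triangle inequality. For `x` on `α` and
`y = γ s` with `s ∈ [t, t']` (and symmetrically for `β`), the closest-point property of `γ t`
gives `d(x, y) ≥ d(x, γ t)`, while the lower quasi-geodesic bound for `γ` gives
`d(x, y) ≥ |t - s|/λ - ε - d(x, γ t)`; whichever is larger dominates the `(3λ, ε)` lower bound. For `x` on `α` and `y` on `β` the hypothesis
`|t - t'| ≥ 3λ (d(p, γ t) + d(q, γ t'))` makes the detours along `α` and `β` small compared with
`d(γ t, γ t')`.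
-/

open Set Metric

universe u

variable {X : Type*}

def QGBound (lam eps r d : ℝ) : Prop :=
  (1 / lam) * r - eps ≤ d ∧ d ≤ lam * r + eps

theorem QGBound.mono {lam lam' eps r d : ℝ} (h : QGBound lam eps r d) (hlam : 0 < lam)
    (hle : lam ≤ lam') (hr : 0 ≤ r) : QGBound lam' eps r d := by
  have : 1 / lam' * r ≤ 1 / lam * r := by gcongr
  have : lam * r ≤ lam' * r := by gcongr
  exact ⟨by linarith [h.1], by linarith [h.2]⟩

theorem qgBound_self {lam eps r : ℝ} (hlam : 1 ≤ lam) (heps : 0 ≤ eps) (hr : 0 ≤ r) :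
    QGBound lam eps r r :=
  QGBound.mono (lam := 1) (by norm_num [QGBound, heps]) one_pos hlam hr

noncomputable def concatPath (α γ β : ℝ → X) (a t t' : ℝ) : ℝ → X := fun u =>
  if u ≤ a then α u else if u ≤ a + (t' - t) then γ (t + (u - a)) else β (u - (a + (t' - t)))

section ConcatPath

variable {α γ β : ℝ → X} {a t t' u : ℝ}

theorem concatPath_of_le (h : u ≤ a) : concatPath α γ β a t t' u = α u := if_pos h

theorem concatPath_of_mem_mid (hαγ : α a = γ t) (h₁ : a ≤ u) (h₂ : u ≤ a + (t' - t)) :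
    concatPath α γ β a t t' u = γ (t + (u - a)) := by
  rcases h₁.eq_or_lt with rfl | h₁
  · simp [concatPath, hαγ]
  · simp [concatPath, h₁.not_ge, h₂]

theorem concatPath_of_ge (hαγ : α a = γ t) (hγβ : β 0 = γ t') (htt' : t ≤ t')
    (h : a + (t' - t) ≤ u) : concatPath α γ β a t t' u = β (u - (a + (t' - t))) := by
  rcases h.eq_or_lt with rfl | h
  · rw [concatPath_of_mem_mid hαγ (by linarith) le_rfl, sub_self, hγβ]
    congr 1; ring
  · simp [concatPath, h.not_ge, (show a < u by linarith).not_ge]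

theorem continuousOn_concatPath [TopologicalSpace X] {b : ℝ} (hα : ContinuousOn α (Icc 0 a))
    (hγ : ContinuousOn γ (Icc t t')) (hβ : ContinuousOn β (Icc 0 b)) (hαγ : α a = γ t)
    (hγβ : β 0 = γ t') (ha : 0 ≤ a) (htt' : t ≤ t') (hb : 0 ≤ b) :
    ContinuousOn (concatPath α γ β a t t') (Icc 0 (a + (t' - t) + b)) := by
  have h₁ : ContinuousOn (concatPath α γ β a t t') (Icc 0 a) :=
    hα.congr fun u hu => concatPath_of_le hu.2
  have h₂ : ContinuousOn (concatPath α γ β a t t') (Icc a (a + (t' - t))) :=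
    (hγ.comp (by fun_prop) fun u hu => ⟨by linarith [hu.1], by linarith [hu.2]⟩).congr
      fun u hu => concatPath_of_mem_mid hαγ hu.1 hu.2
  have h₃ : ContinuousOn (concatPath α γ β a t t') (Icc (a + (t' - t)) (a + (t' - t) + b)) :=
    (hβ.comp (by fun_prop) fun u hu => ⟨by linarith [hu.1], by linarith [hu.2]⟩).congr
      fun u hu => concatPath_of_ge hαγ hγβ htt' hu.1
  rw [← Icc_union_Icc_eq_Icc (by linarith) (by linarith : a + (t' - t) ≤ _),
    ← Icc_union_Icc_eq_Icc ha (by linarith)]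
  exact (h₁.union_of_isClosed h₂ isClosed_Icc isClosed_Icc).union_of_isClosed h₃
    (isClosed_Icc.union isClosed_Icc) isClosed_Icc

end ConcatPath

section Metric

variable [MetricSpace X]

theorem qgBound_of_closest {p x y z : X} {lam eps a b : ℝ} (hlam : 1 ≤ lam) (heps : 0 ≤ eps)
    (ha : 0 ≤ a) (hb : 0 ≤ b) (hpx : dist p x + a = dist p z) (hxz : dist x z = a)
    (hclosest : dist p z ≤ dist p y) (hzy : QGBound lam eps b (dist z y)) :
    QGBound (3 * lam) eps (a + b) (dist x y) := by
  have hμ0 : 0 < 1 / lam := by positivity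
  have hμ1 : 1 / lam ≤ 1 := by rw [div_le_one₀ (by linarith)]; exact hlam
  have h3 : 1 / (3 * lam) = 1 / lam / 3 := by ring
  have hpy := dist_triangle p x y
  have hzxy := dist_triangle z x y
  have hxzy := dist_triangle x z y
  rw [dist_comm z x] at hzxy
  obtain ⟨hlow, hup⟩ := hzy
  constructor
  · rw [h3]
    -- `a ≤ dist x y` wins when `b / lam ≤ 2 a`, `b / lam - eps - a ≤ dist x y` otherwise
    rcases le_total (1 / lam * b) (2 * a) with h | h <;> nlinarith
  · nlinarith

theorem qgBound_of_far {x y z z' : X} {lam eps a c Δ : ℝ} (hlam : 1 ≤ lam) (ha : 0 ≤ a) (hc : 0 ≤ c)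
    (hxz : dist x z = a) (hz'y : dist z' y = c)
    (hzz' : QGBound lam eps Δ (dist z z')) (hfar : 3 * lam * (a + c) ≤ Δ) :
    QGBound (3 * lam) eps (a + Δ + c) (dist x y) := by
  have hμ0 : 0 < 1 / lam := by positivity
  have hμ1 : 1 / lam ≤ 1 := by rw [div_le_one₀ (by linarith)]; exact hlam
  have h3 : 1 / (3 * lam) = 1 / lam / 3 := by ring
  have hfar' : 3 * (a + c) ≤ 1 / lam * Δ := by
    rw [one_div_mul_eq_div, le_div_iff₀ (by linarith)]; linarith
  have h1 := dist_triangle4 z x y z'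
  have h2 := dist_triangle4 x z z' y
  rw [dist_comm z x, dist_comm y z'] at h1
  obtain ⟨hlow, hup⟩ := hzz'
  constructor
  · rw [h3]; nlinarith
  · nlinarith [mul_nonneg (by linarith : (0:ℝ) ≤ lam) ha, mul_nonneg (by linarith : (0:ℝ) ≤ lam) hc]

theorem IsQuasiGeodesicOn.mono {γ : ℝ → X} {I J : Set ℝ} {lam eps : ℝ}
    (h : IsQuasiGeodesicOn γ J lam eps) (hIJ : I ⊆ J) : IsQuasiGeodesicOn γ I lam eps :=
  fun s hs u hu => h s (hIJ hs) u (hIJ hu)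

theorem IsQuasiGeodesicOn.qgBound {γ : ℝ → X} {I : Set ℝ} {lam eps s u : ℝ}
    (h : IsQuasiGeodesicOn γ I lam eps) (hs : s ∈ I) (hu : u ∈ I) (hsu : s ≤ u) :
    QGBound lam eps (u - s) (dist (γ s) (γ u)) := by
  simpa only [QGBound, abs_sub_comm s u, abs_of_nonneg (sub_nonneg.2 hsu)] using h s hs u hu

theorem isQuasiGeodesicOn_of_qgBound {γ : ℝ → X} {I : Set ℝ} {lam eps : ℝ}
    (h : ∀ s ∈ I, ∀ u ∈ I, s ≤ u → QGBound lam eps (u - s) (dist (γ s) (γ u))) :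
    IsQuasiGeodesicOn γ I lam eps := by
  intro s hs u hu
  rcases le_total s u with hsu | hus
  · simpa only [QGBound, abs_sub_comm s u, abs_of_nonneg (sub_nonneg.2 hsu)] using h s hs u hu hsu
  · simpa only [QGBound, dist_comm, abs_of_nonneg (sub_nonneg.2 hus)] using h u hu s hs hus

variable {α : ℝ → X} {a : ℝ}

theorem IsGeodesicOn.continuousOn {I : Set ℝ} (h : IsGeodesicOn α I) : ContinuousOn α I :=
  (LipschitzOnWith.mk_one fun x hx y hy =>
    (h x hx y hy).trans_le (Real.dist_eq x y).ge).continuousOn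

theorem IsGeodesicOn.dist_of_le {I : Set ℝ} (h : IsGeodesicOn α I) {s u : ℝ} (hs : s ∈ I)
    (hu : u ∈ I) (hsu : s ≤ u) : dist (α s) (α u) = u - s := by
  rw [h s hs u hu, abs_sub_comm, abs_of_nonneg (sub_nonneg.2 hsu)]

theorem IsGeodesicOn.dist_left (h : IsGeodesicOn α (Icc 0 a)) {s : ℝ} (hs : s ∈ Icc 0 a) :
    dist (α 0) (α s) = s := by
  rw [h.dist_of_le ⟨le_rfl, hs.1.trans hs.2⟩ hs hs.1, sub_zero]

theorem IsGeodesicOn.dist_right (h : IsGeodesicOn α (Icc 0 a)) {s : ℝ} (hs : s ∈ Icc 0 a) :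
    dist (α s) (α a) = a - s :=
  h.dist_of_le hs ⟨hs.1.trans hs.2, le_rfl⟩ hs.2

theorem qgBound_concatPath_of_le_mid {p : X} {γ α β : ℝ → X} {lam eps t t' s u : ℝ}
    (hlam : 1 ≤ lam) (heps : 0 ≤ eps) (hqg : IsQuasiGeodesicOn γ (Icc t t') lam eps)
    (hclosest : ∀ r ∈ Icc t t', dist p (γ t) ≤ dist p (γ r)) (htt' : t ≤ t')
    (hα0 : α 0 = p) (hα1 : α (dist p (γ t)) = γ t)
    (hαgeo : IsGeodesicOn α (Icc 0 (dist p (γ t))))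
    (hs0 : 0 ≤ s) (hsu : s ≤ u) (huΔ : u ≤ dist p (γ t) + (t' - t)) :
    QGBound (3 * lam) eps (u - s) (dist (concatPath α γ β (dist p (γ t)) t t' s)
      (concatPath α γ β (dist p (γ t)) t t' u)) := by
  set a := dist p (γ t)
  have hmid : ∀ {u}, a ≤ u → u ≤ a + (t' - t) → t + (u - a) ∈ Icc t t' :=
    fun h₁ h₂ => ⟨by linarith, by linarith⟩
  rcases le_total u a with hua | hau
  · rw [concatPath_of_le hua, concatPath_of_le (hsu.trans hua),
      hαgeo.dist_of_le ⟨hs0, hsu.trans hua⟩ ⟨hs0.trans hsu, hua⟩ hsu]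
    exact qgBound_self (by linarith : (1 : ℝ) ≤ 3 * lam) heps (by linarith)
  rw [concatPath_of_mem_mid hα1 hau huΔ]
  rcases le_total s a with hsa | has
  · rw [concatPath_of_le hsa]
    have hαp : dist p (α s) = s := hα0 ▸ hαgeo.dist_left ⟨hs0, hsa⟩
    have hγ : QGBound lam eps (u - a) (dist (γ t) (γ (t + (u - a)))) := by
      simpa using hqg.qgBound ⟨le_rfl, htt'⟩ (hmid hau huΔ) (by linarith)
    have := qgBound_of_closest hlam heps (by linarith) (by linarith)
      (by rw [hαp]; ring) (hα1 ▸ hαgeo.dist_right ⟨hs0, hsa⟩)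
      (hclosest _ (hmid hau huΔ)) hγ
    convert this using 2; ring
  · rw [concatPath_of_mem_mid hα1 has (hsu.trans huΔ)]
    have := hqg.qgBound (hmid has (hsu.trans huΔ)) (hmid hau huΔ) (by linarith)
    rw [show t + (u - a) - (t + (s - a)) = u - s by ring] at this
    exact this.mono (by linarith) (by linarith) (by linarith)

theorem qgBound_concatPath_of_mid_le {p q : X} {γ α β : ℝ → X} {lam eps t t' s u : ℝ}
    (hlam : 1 ≤ lam) (heps : 0 ≤ eps) (hqg : IsQuasiGeodesicOn γ (Icc t t') lam eps)
    (hclosest' : ∀ r ∈ Icc t t', dist q (γ t') ≤ dist q (γ r))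
    (hfar : 3 * lam * (dist p (γ t) + dist (γ t') q) ≤ t' - t) (htt' : t ≤ t')
    (hα1 : α (dist p (γ t)) = γ t) (hαgeo : IsGeodesicOn α (Icc 0 (dist p (γ t))))
    (hβ0 : β 0 = γ t') (hβ1 : β (dist (γ t') q) = q)
    (hβgeo : IsGeodesicOn β (Icc 0 (dist (γ t') q)))
    (hs0 : 0 ≤ s) (hsu : s ≤ u) (hΔu : dist p (γ t) + (t' - t) ≤ u)
    (huL : u ≤ dist p (γ t) + (t' - t) + dist (γ t') q) :
    QGBound (3 * lam) eps (u - s) (dist (concatPath α γ β (dist p (γ t)) t t' s)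
      (concatPath α γ β (dist p (γ t)) t t' u)) := by
  set a := dist p (γ t)
  set b := dist (γ t') q
  have hv : u - (a + (t' - t)) ∈ Icc 0 b := ⟨by linarith, by linarith⟩
  have hβz : dist (β (u - (a + (t' - t)))) (γ t') = u - (a + (t' - t)) := by
    rw [dist_comm, ← hβ0, hβgeo.dist_left hv]
  rw [concatPath_of_ge hα1 hβ0 htt' hΔu]
  rcases le_total s a with hsa | has
  · rw [concatPath_of_le hsa]
    have := qgBound_of_far hlam (by linarith) hv.1 (hα1 ▸ hαgeo.dist_right ⟨hs0, hsa⟩)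
      (by rw [dist_comm, hβz]) (by simpa using hqg.qgBound ⟨le_rfl, htt'⟩ ⟨htt', le_rfl⟩ htt')
      ((mul_le_mul_of_nonneg_left (by linarith [hv.2]) (by linarith)).trans hfar)
    convert this using 2; ring
  rcases le_total s (a + (t' - t)) with hsΔ | hΔs
  · have hr : t + (s - a) ∈ Icc t t' := ⟨by linarith, by linarith⟩
    rw [concatPath_of_mem_mid hα1 has hsΔ, dist_comm]
    have hγ : QGBound lam eps (t' - (t + (s - a))) (dist (γ t') (γ (t + (s - a)))) := by
      simpa only [dist_comm] using hqg.qgBound hr ⟨htt', le_rfl⟩ (by linarith)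
    have hβq : dist q (β (u - (a + (t' - t)))) = b - (u - (a + (t' - t))) := by
      rw [dist_comm, ← hβ1, hβgeo.dist_right hv]
    have := qgBound_of_closest hlam heps hv.1 (by linarith) (by rw [hβq, dist_comm]; ring) hβz
      (hclosest' _ hr) hγ
    convert this using 2; ring
  · rw [concatPath_of_ge hα1 hβ0 htt' hΔs,
      hβgeo.dist_of_le ⟨by linarith, by linarith⟩ hv (by linarith)]
    convert qgBound_self (by linarith : (1 : ℝ) ≤ 3 * lam) heps (by linarith : 0 ≤ u - s) using 1
    ring

theorem isQuasiGeodesicOn_concatPath {p q : X} {γ α β : ℝ → X} {lam eps t t' : ℝ}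
    (hlam : 1 ≤ lam) (heps : 0 ≤ eps) (hqg : IsQuasiGeodesicOn γ (Icc t t') lam eps)
    (hclosest : ∀ r ∈ Icc t t', dist p (γ t) ≤ dist p (γ r))
    (hclosest' : ∀ r ∈ Icc t t', dist q (γ t') ≤ dist q (γ r))
    (hfar : 3 * lam * (dist p (γ t) + dist (γ t') q) ≤ t' - t)
    (hα0 : α 0 = p) (hα1 : α (dist p (γ t)) = γ t)
    (hαgeo : IsGeodesicOn α (Icc 0 (dist p (γ t))))
    (hβ0 : β 0 = γ t') (hβ1 : β (dist (γ t') q) = q)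
    (hβgeo : IsGeodesicOn β (Icc 0 (dist (γ t') q))) :
    IsQuasiGeodesicOn (concatPath α γ β (dist p (γ t)) t t')
      (Icc 0 (dist p (γ t) + (t' - t) + dist (γ t') q)) (3 * lam) eps := by
  have htt' : t ≤ t' :=
    sub_nonneg.1 ((mul_nonneg (by linarith) (add_nonneg dist_nonneg dist_nonneg)).trans hfar)
  refine isQuasiGeodesicOn_of_qgBound fun s ⟨hs0, _⟩ u ⟨_, huL⟩ hsu => ?_
  rcases le_total u (dist p (γ t) + (t' - t)) with huΔ | hΔu
  · exact qgBound_concatPath_of_le_mid hlam heps hqg hclosest htt' hα0 hα1 hαgeo hs0 hsu huΔ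
  · exact qgBound_concatPath_of_mid_le hlam heps hqg hclosest' hfar htt' hα1 hαgeo hβ0 hβ1 hβgeo
      hs0 hsu hΔu huL

end Metric

theorem statement1_general {X : Type u} [MetricSpace X]
    (p q : X) (T lam eps t t' : ℝ) (γ : ℝ → X)
    (hlam : 1 ≤ lam) (heps : 0 ≤ eps)
    (hcont : ContinuousOn γ (Icc 0 T))
    (hqg : IsQuasiGeodesicOn γ (Icc 0 T) lam eps)
    (ht : t ∈ Icc 0 T) (ht' : t' ∈ Icc 0 T) (htt' : t ≤ t')
    (hclosest : ∀ s ∈ Icc 0 T, dist p (γ t) ≤ dist p (γ s))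
    (hclosest' : ∀ s ∈ Icc 0 T, dist q (γ t') ≤ dist q (γ s))
    (hfar : 3 * lam * (dist p (γ t) + dist q (γ t')) ≤ |t - t'|)
    (α : ℝ → X) (hα0 : α 0 = p) (hα1 : α (dist p (γ t)) = γ t)
    (hαgeo : IsGeodesicOn α (Icc 0 (dist p (γ t))))
    (β : ℝ → X) (hβ0 : β 0 = γ t') (hβ1 : β (dist (γ t') q) = q)
    (hβgeo : IsGeodesicOn β (Icc 0 (dist (γ t') q))) :
    ContinuousOn
        (fun u => if u ≤ dist p (γ t) then α u
          else if u ≤ dist p (γ t) + (t' - t) then γ (t + (u - dist p (γ t)))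
          else β (u - (dist p (γ t) + (t' - t))))
        (Icc 0 (dist p (γ t) + (t' - t) + dist (γ t') q)) ∧
      IsQuasiGeodesicOn
        (fun u => if u ≤ dist p (γ t) then α u
          else if u ≤ dist p (γ t) + (t' - t) then γ (t + (u - dist p (γ t)))
          else β (u - (dist p (γ t) + (t' - t))))
        (Icc 0 (dist p (γ t) + (t' - t) + dist (γ t') q)) (3 * lam) eps := by
  have hsub : Icc t t' ⊆ Icc 0 T := Icc_subset_Icc ht.1 ht'.2
  rw [abs_sub_comm, abs_of_nonneg (sub_nonneg.2 htt'), dist_comm q] at hfar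
  exact ⟨continuousOn_concatPath hαgeo.continuousOn (hcont.mono hsub) hβgeo.continuousOn hα1 hβ0
      dist_nonneg htt' dist_nonneg,
    isQuasiGeodesicOn_concatPath hlam heps (hqg.mono hsub) (fun r hr => hclosest r (hsub hr))
      (fun r hr => hclosest' r (hsub hr)) hfar hα0 hα1 hαgeo hβ0 hβ1 hβgeo⟩

/-- If `γ : [0,T] → X` is a continuous `(lam, eps)`-quasi-geodesic, `γ t` and
`γ t'` are closest points on `γ` to `p` and `q` respectively with `t ≤ t'`, `α` is a geodesic
from `p` to `γ t`, `β` a geodesic from `γ t'` to `q`, and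
`|t - t'| ≥ 3 lam (d(p, γ t) + d(q, γ t'))`, then `α · γ|[t,t'] · β` is a continuous
`(3 lam, eps)`-quasi-geodesic. -/
theorem statement1 {X : Type u} [MetricSpace X] (hX : GeodesicSpace X)
    (p q : X) (T lam eps t t' : ℝ) (γ : ℝ → X)
    (hT : 0 ≤ T) (hlam : 1 ≤ lam) (heps : 0 ≤ eps)
    (hcont : ContinuousOn γ (Icc 0 T))
    (hqg : IsQuasiGeodesicOn γ (Icc 0 T) lam eps)
    (ht : t ∈ Icc 0 T) (ht' : t' ∈ Icc 0 T) (htt' : t ≤ t')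
    (hclosest : ∀ s ∈ Icc 0 T, dist p (γ t) ≤ dist p (γ s))
    (hclosest' : ∀ s ∈ Icc 0 T, dist q (γ t') ≤ dist q (γ s))
    (hfar : 3 * lam * (dist p (γ t) + dist q (γ t')) ≤ |t - t'|)
    (α : ℝ → X) (hα0 : α 0 = p) (hα1 : α (dist p (γ t)) = γ t)
    (hαgeo : IsGeodesicOn α (Icc 0 (dist p (γ t))))
    (β : ℝ → X) (hβ0 : β 0 = γ t') (hβ1 : β (dist (γ t') q) = q)
    (hβgeo : IsGeodesicOn β (Icc 0 (dist (γ t') q))) :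
    ContinuousOn
        (fun u => if u ≤ dist p (γ t) then α u
          else if u ≤ dist p (γ t) + (t' - t) then γ (t + (u - dist p (γ t)))
          else β (u - (dist p (γ t) + (t' - t))))
        (Icc 0 (dist p (γ t) + (t' - t) + dist (γ t') q)) ∧
      IsQuasiGeodesicOn
        (fun u => if u ≤ dist p (γ t) then α u
          else if u ≤ dist p (γ t) + (t' - t) then γ (t + (u - dist p (γ t)))
          else β (u - (dist p (γ t) + (t' - t))))
        (Icc 0 (dist p (γ t) + (t' - t) + dist (γ t') q)) (3 * lam) eps :=
  statement1_general p q T lam eps t t' γ hlam heps hcont hqg ht ht' htt' hclosest hclosest' hfar α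
    hα0 hα1 hαgeo β hβ0 hβ1 hβgeo
end

section
/- Let X be a geodesic metric space with basepoint e, M ≤ N Morse gauges, and z, z' points of X ∪ ∂_*X admitting M-Morse realisations ξ, ζ from a point a. If z' ∈ Õᴹ_{n+18δ_M}(z, a), then ζ ∈ Õᴹ_n(ξ, a); that is, membership of the direction z' in the neighbourhood of z of depth n + 18δ_M (witnessed by some pair of M-Morse realisations) implies that every/the given pair of M-Morse realisations (ξ, ζ) δ_M-fellow-travel on [0, n]. -/
open Set Metric

universe u

/-- `ξ` and `ξ'` are `a`-realisations of the same point of `X ∪ ∂_* X`: either both are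
geodesic segments with the same endpoint, or both are geodesic rays at finite Hausdorff
distance. -/
def SameTarget {X : Type*} [MetricSpace X] (ξ ξ' : ℝ → X) (Iξ Iξ' : Set ℝ) : Prop :=
  (∃ L L' : ℝ, 0 ≤ L ∧ 0 ≤ L' ∧ Iξ = Icc 0 L ∧ Iξ' = Icc 0 L' ∧ ξ L = ξ' L') ∨
  (Iξ = Ici 0 ∧ Iξ' = Ici 0 ∧
    EMetric.hausdorffEdist (ξ '' Ici 0) (ξ' '' Ici 0) ≠ ⊤)

/-! If `α` is a geodesic issuing from `ξ 0` and `α A` is a closest point of `α [0, A]` to a point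
`z` of the `M`-Morse geodesic `ξ`, then `α` on `[0, A]` followed by a geodesic from `α A` to `z` is a
continuous `(3, 0)`-quasi-geodesic with endpoints on `ξ`; it therefore stays `M(3,0)`-close to `ξ`,
and `α u` is `2 M(3,0)`-close to `ξ u`. For two realisations of the same target this gives
fellow-travelling with constant `2 M(3,0) ≤ δ_M / 4`. Hence `ξ` and `ζ` are at distance at most
`δ_M + 4 M(3,0)` at time `T = n + 18 δ_M`, and the same argument with `α = ζ` and `z = ξ T` gives
`d(ζ t, ξ t) ≤ 2 M(3,0) < δ_M` on `[0, n]`. -/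

section Concatenation

variable {X : Type*} {α c : ℝ → X} {A u : ℝ}

noncomputable def concatAt (α c : ℝ → X) (A : ℝ) : ℝ → X :=
  fun u => if u ≤ A then α u else c (u - A)

theorem concatAt_of_le (h : u ≤ A) : concatAt α c A u = α u := if_pos h

theorem concatAt_of_ge (hc : c 0 = α A) (h : A ≤ u) : concatAt α c A u = c (u - A) := by
  rcases h.eq_or_lt with rfl | h
  · simp [concatAt, hc]
  · simp [concatAt, not_le.2 h]

end Concatenation

section Geodesics

variable {X : Type*} [MetricSpace X]

theorem dist_bounds_of_closest {x p y z : X} (hpz : dist p z ≤ dist x z)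
    (hpy : dist p y + dist y z = dist p z) :
    (dist x p + dist p y) / 3 ≤ dist x y ∧ dist x y ≤ dist x p + dist p y := by
  have h₁ := dist_triangle x y p
  have h₂ := dist_triangle x y z
  rw [dist_comm y p] at h₁
  exact ⟨by linarith, dist_triangle x p y⟩

theorem continuousOn_and_isQuasiGeodesicOn_of_le {η : ℝ → X} {I : Set ℝ}
    (h : ∀ s ∈ I, ∀ t ∈ I, s ≤ t →
      (t - s) / 3 ≤ dist (η s) (η t) ∧ dist (η s) (η t) ≤ t - s) :
    ContinuousOn η I ∧ IsQuasiGeodesicOn η I 3 0 := by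
  have hsymm : ∀ s ∈ I, ∀ t ∈ I, |s - t| / 3 ≤ dist (η s) (η t) ∧ dist (η s) (η t) ≤ |s - t| := by
    intro s hs t ht
    rcases le_total s t with hst | hts
    · rw [abs_sub_comm, abs_of_nonneg (sub_nonneg.2 hst)]
      exact h s hs t ht hst
    · rw [abs_of_nonneg (sub_nonneg.2 hts), dist_comm]
      exact h t ht s hs hts
  refine ⟨(LipschitzOnWith.of_dist_le_mul (K := 1) fun s hs t ht => ?_).continuousOn,
    fun s hs t ht => ?_⟩
  · simpa [Real.dist_eq] using (hsymm s hs t ht).2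
  · obtain ⟨hlow, hupp⟩ := hsymm s hs t ht
    constructor <;> linarith

namespace IsGeodesicOn

variable {γ : ℝ → X} {I J : Set ℝ}

theorem mono (h : IsGeodesicOn γ I) (hJ : J ⊆ I) : IsGeodesicOn γ J :=
  fun s hs t ht => h s (hJ hs) t (hJ ht)

theorem dist_eq_sub (h : IsGeodesicOn γ I) {s t : ℝ} (hs : s ∈ I) (ht : t ∈ I) (hst : s ≤ t) :
    dist (γ s) (γ t) = t - s := by
  rw [h s hs t ht, abs_sub_comm, abs_of_nonneg (sub_nonneg.2 hst)]

theorem exists_closest {R : ℝ} (h : IsGeodesicOn γ (Icc 0 R)) (hR : 0 ≤ R) (z : X) :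
    ∃ s ∈ Icc 0 R, ∀ t ∈ Icc 0 R, dist z (γ s) ≤ dist z (γ t) := by
  have hγ : LipschitzOnWith 1 γ (Icc 0 R) :=
    LipschitzOnWith.of_dist_le_mul fun s hs t ht => by simp [h s hs t ht, Real.dist_eq]
  exact isCompact_Icc.exists_isMinOn (nonempty_Icc.2 hR)
    ((continuous_const.dist continuous_id).comp_continuousOn hγ.continuousOn)

theorem dist_le_two_mul {x : X} {u σ B : ℝ} (h : IsGeodesicOn γ I) (h0 : 0 ∈ I) (hu : u ∈ I)
    (hσ : σ ∈ I) (hσ0 : 0 ≤ σ) (hx : dist (γ 0) x = u) (hB : dist x (γ σ) ≤ B) :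
    dist x (γ u) ≤ 2 * B := by
  have hσu : |σ - u| ≤ B := by
    have := abs_dist_sub_le (γ σ) x (γ 0)
    rw [dist_comm (γ σ), h.dist_eq_sub h0 hσ hσ0, sub_zero, dist_comm x, hx, dist_comm] at this
    exact this.trans hB
  calc dist x (γ u) ≤ dist x (γ σ) + dist (γ σ) (γ u) := dist_triangle _ _ _
    _ ≤ B + B := add_le_add hB (by rw [h σ hσ u hu]; exact hσu)
    _ = 2 * B := by ring

end IsGeodesicOn

variable {α c : ℝ → X} {A L : ℝ}

theorem dist_concatAt_bounds {z : X} (hα : IsGeodesicOn α (Icc 0 A))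
    (hc : IsGeodesicOn c (Icc 0 L)) (hL : 0 ≤ L) (hc0 : c 0 = α A) (hcL : c L = z)
    (hmin : ∀ s ∈ Icc 0 A, dist z (α A) ≤ dist z (α s)) {s t : ℝ} (hs : 0 ≤ s) (hst : s ≤ t)
    (ht : t ≤ A + L) :
    (t - s) / 3 ≤ dist (concatAt α c A s) (concatAt α c A t) ∧
      dist (concatAt α c A s) (concatAt α c A t) ≤ t - s := by
  rcases le_or_gt t A with htA | hAt
  · rw [concatAt_of_le (hst.trans htA), concatAt_of_le htA,
      hα.dist_eq_sub ⟨hs, hst.trans htA⟩ ⟨hs.trans hst, htA⟩ hst]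
    constructor <;> linarith
  rcases le_or_gt s A with hsA | hAs
  · rw [concatAt_of_le hsA, concatAt_of_ge hc0 hAt.le]
    have hA : A ∈ Icc 0 A := ⟨hs.trans hsA, le_rfl⟩
    have htL : t - A ∈ Icc 0 L := ⟨by linarith, by linarith⟩
    have hxp := hα.dist_eq_sub ⟨hs, hsA⟩ hA hsA
    have hpy := hc.dist_eq_sub ⟨le_rfl, hL⟩ htL htL.1
    have hyz := hc.dist_eq_sub htL ⟨hL, le_rfl⟩ htL.2
    have hpz := hc.dist_eq_sub ⟨le_rfl, hL⟩ ⟨hL, le_rfl⟩ hL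
    rw [hc0] at hpy hpz
    rw [hcL] at hyz hpz
    have hclosest : dist (α A) z ≤ dist (α s) z := by
      simpa only [dist_comm z] using hmin s ⟨hs, hsA⟩
    have hbounds := dist_bounds_of_closest hclosest (by rw [hpy, hyz, hpz]; ring)
    rw [hxp, hpy] at hbounds
    constructor <;> linarith [hbounds.1, hbounds.2]
  · rw [concatAt_of_ge hc0 hAs.le, concatAt_of_ge hc0 hAt.le,
      hc.dist_eq_sub ⟨by linarith, by linarith⟩ ⟨by linarith, by linarith⟩ (by linarith)]
    constructor <;> linarith

end Geodesics

namespace IsMorseWith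

variable {X : Type*} [MetricSpace X] {M : ℝ → ℝ → ℝ} {ξ α : ℝ → X} {I : Set ℝ} {z : X}

theorem dist_le_of_closest (hMor : IsMorseWith M ξ I) (hX : GeodesicSpace X)
    (hξ : IsGeodesicOn ξ I) (h0 : 0 ∈ I) (hI : I ⊆ Ici 0) {A : ℝ}
    (hα : IsGeodesicOn α (Icc 0 A)) (hA : 0 ≤ A) (hα0 : α 0 = ξ 0) (hz : z ∈ ξ '' I)
    (hmin : ∀ s ∈ Icc 0 A, dist z (α A) ≤ dist z (α s)) :
    ∀ u ∈ Icc 0 A, u ∈ I → dist (α u) (ξ u) ≤ 2 * M 3 0 := by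
  obtain ⟨c, hc0, hcz, hc⟩ := hX (α A) z
  have hL : 0 ≤ dist (α A) z := dist_nonneg
  obtain ⟨hcont, hqg⟩ := continuousOn_and_isQuasiGeodesicOn_of_le
    (η := concatAt α c A) (I := Icc 0 (A + dist (α A) z))
    fun s hs t ht hst => dist_concatAt_bounds hα hc hL hc0 hcz hmin hs.1 hst ht.2
  have hstart : concatAt α c A 0 ∈ ξ '' I := ⟨0, h0, by rw [concatAt_of_le hA, hα0]⟩
  have hend : concatAt α c A (A + dist (α A) z) ∈ ξ '' I := by
    rwa [concatAt_of_ge hc0 (by linarith), add_sub_cancel_left, hcz]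
  intro u hu huI
  obtain ⟨σ, hσ, hdist⟩ := hMor 3 0 (by norm_num) le_rfl _ 0 _ (by linarith) hcont hqg
    hstart hend u ⟨hu.1, by linarith [hu.2]⟩
  rw [concatAt_of_le hu.2] at hdist
  refine hξ.dist_le_two_mul h0 huI hσ (hI hσ) ?_ hdist
  rw [← hα0, hα.dist_eq_sub ⟨le_rfl, hA⟩ hu hu.1, sub_zero]

theorem dist_le_of_dist_le (hMor : IsMorseWith M ξ I) (hX : GeodesicSpace X)
    (hξ : IsGeodesicOn ξ I) (h0 : 0 ∈ I) (hI : I ⊆ Ici 0) {R K : ℝ}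
    (hα : IsGeodesicOn α (Icc 0 R)) (hα0 : α 0 = ξ 0) (hz : z ∈ ξ '' I)
    (hK : dist (α R) z ≤ K) :
    ∀ u ∈ Icc 0 (R - 2 * K), u ∈ I → dist (α u) (ξ u) ≤ 2 * M 3 0 := by
  intro u hu huI
  have hR : 0 ≤ R := by linarith [hu.1, hu.2, dist_nonneg.trans hK]
  obtain ⟨s, hs, hmin⟩ := hα.exists_closest hR z
  have hzs : dist z (α s) ≤ K := (hmin R ⟨hR, le_rfl⟩).trans (dist_comm z (α R) ▸ hK)
  have hsR : R - 2 * K ≤ s := by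
    have h0R := hα.dist_eq_sub ⟨le_rfl, hR⟩ ⟨hR, le_rfl⟩ hR
    have h0s := hα.dist_eq_sub ⟨le_rfl, hR⟩ hs hs.1
    have h₁ := dist_triangle (α 0) z (α R)
    have h₂ := dist_triangle (α 0) (α s) z
    rw [dist_comm z (α R)] at h₁
    rw [dist_comm (α s) z] at h₂
    linarith
  exact hMor.dist_le_of_closest hX hξ h0 hI (hα.mono (Icc_subset_Icc_right hs.2)) hs.1 hα0 hz
    (fun t ht => hmin t ⟨ht.1, ht.2.trans hs.2⟩) u ⟨hu.1, hu.2.trans hsR⟩ huI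

end IsMorseWith

namespace SameTarget

variable {X : Type*} [MetricSpace X] {ξ ξ' : ℝ → X} {I I' : Set ℝ}

theorem zero_mem (h : SameTarget ξ ξ' I I') : (0 : ℝ) ∈ I := by
  rcases h with ⟨L, -, hL, -, rfl, -⟩ | ⟨rfl, -⟩
  · exact ⟨le_rfl, hL⟩
  · exact mem_Ici.2 le_rfl

theorem subset_Ici (h : SameTarget ξ ξ' I I') : I ⊆ Ici 0 := by
  rcases h with ⟨L, -, -, -, rfl, -⟩ | ⟨rfl, -⟩
  · exact fun _ hu => hu.1
  · exact subset_rfl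

theorem dist_le (h : SameTarget ξ ξ' I I') {M : ℝ → ℝ → ℝ} (hX : GeodesicSpace X)
    (hξ : IsGeodesicOn ξ I) (hξ' : IsGeodesicOn ξ' I') (h0 : ξ' 0 = ξ 0)
    (hMor : IsMorseWith M ξ I) :
    ∀ u ∈ I, dist (ξ' u) (ξ u) ≤ 2 * M 3 0 := by
  have hI0 := h.zero_mem
  have hI := h.subset_Ici
  rcases h with ⟨L, L', hL, hL', rfl, rfl, hend⟩ | ⟨rfl, rfl, hH⟩
  · obtain rfl : L' = L := by
      have h₁ := hξ.dist_eq_sub ⟨le_rfl, hL⟩ ⟨hL, le_rfl⟩ hL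
      have h₂ := hξ'.dist_eq_sub ⟨le_rfl, hL'⟩ ⟨hL', le_rfl⟩ hL'
      rw [h0, ← hend] at h₂
      linarith
    intro u hu
    exact hMor.dist_le_of_dist_le hX hξ hI0 hI hξ' h0 ⟨L', ⟨hL, le_rfl⟩, rfl⟩ (K := 0)
      (by rw [← hend, dist_self]) u ⟨hu.1, by linarith [hu.2]⟩ hu
  · intro u hu
    set K := hausdorffDist (ξ '' Ici 0) (ξ' '' Ici 0) + 1
    have hK : 0 ≤ K := add_nonneg hausdorffDist_nonneg zero_le_one
    have hu0 : 0 ≤ u := hu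
    obtain ⟨z, hz, hzK⟩ := exists_dist_lt_of_hausdorffDist_lt'
      (mem_image_of_mem ξ' (show u + 2 * K ∈ Ici 0 from mem_Ici.2 (by linarith)))
      (lt_add_one _) hH
    have hzK' : dist (ξ' (u + 2 * K)) z ≤ K := by rw [dist_comm]; exact hzK.le
    exact hMor.dist_le_of_dist_le hX hξ hI0 hI (hξ'.mono Icc_subset_Ici_self) h0 hz hzK' u
      ⟨hu0, by linarith⟩ hu

end SameTarget

theorem statement18_general {X : Type u} [MetricSpace X] (hX : GeodesicSpace X)
    (M : ℝ → ℝ → ℝ) (hM : IsMorseGauge M)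
    (a : X) (n : ℝ)
    (ξ ζ ξ' ζ' : ℝ → X) (Iξ Iζ Iξ' Iζ' : Set ℝ)
    (hIξ : Icc 0 (n + 18 * morseDelta M) ⊆ Iξ)
    (hIζ : Icc 0 (n + 18 * morseDelta M) ⊆ Iζ)
    (hgξ : IsGeodesicOn ξ Iξ) (hgζ : IsGeodesicOn ζ Iζ)
    (hgξ' : IsGeodesicOn ξ' Iξ') (hgζ' : IsGeodesicOn ζ' Iζ')
    (h0ξ : ξ 0 = a) (h0ζ : ζ 0 = a) (h0ξ' : ξ' 0 = a) (h0ζ' : ζ' 0 = a)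
    (hMξ : IsMorseWith M ξ Iξ) (hMζ : IsMorseWith M ζ Iζ)
    (hrealξ : SameTarget ξ ξ' Iξ Iξ')
    (hrealζ : SameTarget ζ ζ' Iζ Iζ')
    (hclose : ∀ t ∈ Icc 0 (n + 18 * morseDelta M), dist (ζ' t) (ξ' t) < morseDelta M) :
    ∀ t ∈ Icc 0 n, dist (ζ t) (ξ t) < morseDelta M := by
  intro t ht
  set δ := morseDelta M
  set T := n + 18 * δ
  have hM30 : 0 ≤ M 3 0 := hM.1 3 0 (by norm_num) le_rfl
  have hδM : 8 * M 3 0 ≤ δ := le_max_right _ _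
  have hT : T ∈ Icc 0 T := ⟨by linarith [ht.1.trans ht.2], le_rfl⟩
  -- needed for the strict inequality when `M 3 0 = 0`
  have hδ : 0 < δ := by simpa [h0ζ', h0ξ'] using hclose 0 ⟨le_rfl, hT.1⟩
  have hξT := hrealξ.dist_le hX hgξ hgξ' (h0ξ'.trans h0ξ.symm) hMξ T (hIξ hT)
  have hζT := hrealζ.dist_le hX hgζ hgζ' (h0ζ'.trans h0ζ.symm) hMζ T (hIζ hT)
  have hζξT : dist (ζ T) (ξ T) ≤ 4 * M 3 0 + δ := by
    linarith [dist_triangle4 (ζ T) (ζ' T) (ξ' T) (ξ T), dist_comm (ζ T) (ζ' T), hclose T hT]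
  have hfellow := hMξ.dist_le_of_dist_le hX hgξ hrealξ.zero_mem hrealξ.subset_Ici
    (hgζ.mono hIζ) (h0ζ.trans h0ξ.symm) ⟨T, hIξ hT, rfl⟩ hζξT
    t ⟨ht.1, by linarith [ht.2]⟩ (hIξ ⟨ht.1, by linarith [ht.2]⟩)
  linarith

/-- Remark on neighbourhoods: Let `M ≤ N` be Morse gauges, `z, z'` points of
`X ∪ ∂_* X` with `M`-Morse `a`-realisations `ξ, ζ`.  If `z' ∈ Õᴹ_{n+18δ_M}(z, a)` —
witnessed by `M`-Morse realisations `ξ'` of `z` and `ζ'` of `z'` which `δ_M`-fellow-travel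
on `[0, n + 18 δ_M]` — then `ζ ∈ Õᴹ_n(ξ, a)`, i.e. `d(ζ t, ξ t) < δ_M` for `t ∈ [0, n]`. -/
theorem statement18 {X : Type u} [MetricSpace X] (hX : GeodesicSpace X)
    (M N : ℝ → ℝ → ℝ) (hM : IsMorseGauge M) (hN : IsMorseGauge N) (hMN : GaugeLE M N)
    (a : X) (n : ℝ) (hn : 0 ≤ n)
    (ξ ζ ξ' ζ' : ℝ → X) (Iξ Iζ Iξ' Iζ' : Set ℝ)
    (hIξ : Icc 0 (n + 18 * morseDelta M) ⊆ Iξ)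
    (hIζ : Icc 0 (n + 18 * morseDelta M) ⊆ Iζ)
    (hIξ' : Icc 0 (n + 18 * morseDelta M) ⊆ Iξ')
    (hIζ' : Icc 0 (n + 18 * morseDelta M) ⊆ Iζ')
    (hgξ : IsGeodesicOn ξ Iξ) (hgζ : IsGeodesicOn ζ Iζ)
    (hgξ' : IsGeodesicOn ξ' Iξ') (hgζ' : IsGeodesicOn ζ' Iζ')
    (h0ξ : ξ 0 = a) (h0ζ : ζ 0 = a) (h0ξ' : ξ' 0 = a) (h0ζ' : ζ' 0 = a)
    (hMξ : IsMorseWith M ξ Iξ) (hMζ : IsMorseWith M ζ Iζ)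
    (hMξ' : IsMorseWith M ξ' Iξ') (hMζ' : IsMorseWith M ζ' Iζ')
    (hrealξ : SameTarget ξ ξ' Iξ Iξ')
    (hrealζ : SameTarget ζ ζ' Iζ Iζ')
    (hclose : ∀ t ∈ Icc 0 (n + 18 * morseDelta M), dist (ζ' t) (ξ' t) < morseDelta M) :
    ∀ t ∈ Icc 0 n, dist (ζ t) (ξ t) < morseDelta M :=
  statement18_general hX M hM a n ξ ζ ξ' ζ' Iξ Iζ Iξ' Iζ' hIξ hIζ hgξ hgζ hgξ' hgζ' h0ξ h0ζ h0ξ'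
    h0ζ' hMξ hMζ hrealξ hrealζ hclose
end
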